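/- Let Φ denote the cumulative distribution function and φ the probability density function of the standard Gaussian distribution N(0,1), and define G(x) := (x·φ(x)·Φ(x) + φ(x)²) / Φ(x)². Then G(x) > 0 for every x ∈ ℝ, and there exists a constant C > 0 such that G(x) < C for every x ∈ ℝ. -/

import Mathlib

/-- CDF of the standard Gaussian distribution `N(0,1)`. -/
noncomputable def gaussCDF (x : ℝ) : ℝ :=
  ((ProbabilityTheory.gaussianReal 0 1) (Set.Iic x)).toReal

/-- PDF of the standard Gaussian distribution `N(0,1)`. -/
noncomputable def gaussPDF (x : ℝ) : ℝ := ProbabilityTheory.gaussianPDFReal 0 1 x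

/-- `G(x) = (x φ(x) Φ(x) + φ(x)²) / Φ(x)²`. -/
noncomputable def G (x : ℝ) : ℝ :=
  (x * gaussPDF x * gaussCDF x + (gaussPDF x) ^ 2) / (gaussCDF x) ^ 2

/-!
The numerator of `G` is `φ(x) (x Φ(x) + φ(x))`, and `x Φ(x) + φ(x) = ∫_{t ≤ x} (x - t) φ(t) dt > 0`.

For the upper bound, `Φ - φ (1 - x) / (x² - x + 2)` is nondecreasing (its derivative is
`φ (x² + 5) / (x² - x + 2)²`) and vanishes at `-∞`, so `Φ ≥ φ (1 - x) / (x² - x + 2)`. This rational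
bound agrees with `Φ / φ` up to `O(|x|⁻³)` at `-∞`, so for `x ≤ 0` it yields both
`x Φ + φ ≤ 2 φ / (x² - x + 2)` and a matching lower bound on `Φ²`, whence `G ≤ 4`. For `x ≥ 0`,
`Φ(x) ≥ Φ(0) ≥ φ(0) / 2` and `x φ(x), φ(x) ≤ φ(0)` give `G ≤ 4 / φ(0) + 4`.
-/

open Real MeasureTheory Set ProbabilityTheory Filter Topology

lemma gaussPDF_eq_mul_exp (x : ℝ) : gaussPDF x = gaussPDF 0 * exp (-x ^ 2 / 2) := by
  simp [gaussPDF, gaussianPDFReal]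

lemma gaussPDF_pos (x : ℝ) : 0 < gaussPDF x := gaussianPDFReal_pos 0 1 x one_ne_zero

lemma hasDerivAt_gaussPDF (x : ℝ) : HasDerivAt gaussPDF (-x * gaussPDF x) x := by
  have h := (((hasDerivAt_pow 2 x).fun_neg.div_const 2).exp).const_mul (gaussPDF 0)
  rw [show gaussPDF = fun t => gaussPDF 0 * exp (-t ^ 2 / 2) from funext gaussPDF_eq_mul_exp]
  exact h.congr_deriv (by simp; ring)

lemma continuous_gaussPDF : Continuous gaussPDF :=
  continuous_iff_continuousAt.2 fun x => (hasDerivAt_gaussPDF x).continuousAt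

lemma integrable_gaussPDF : Integrable gaussPDF := integrable_gaussianPDFReal 0 1

lemma integrable_mul_gaussPDF : Integrable fun t => t * gaussPDF t := by
  refine ((integrable_mul_exp_neg_mul_sq (b := 1 / 2) (by norm_num)).const_mul (gaussPDF 0)).congr
    (ae_of_all _ fun t => ?_)
  simp only [gaussPDF_eq_mul_exp t]; ring_nf

lemma tendsto_gaussPDF_atBot : Tendsto gaussPDF atBot (𝓝 0) := by
  have h : Tendsto (fun x : ℝ => -x ^ 2 / 2) atBot atBot :=
    (tendsto_neg_atTop_atBot.comp (by simpa [sq] using tendsto_id.atBot_mul_atBot₀ tendsto_id))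
      |>.atBot_div_const two_pos
  simpa [← gaussPDF_eq_mul_exp] using (tendsto_exp_atBot.comp h).const_mul (gaussPDF 0)

lemma gaussPDF_le_gaussPDF_zero (x : ℝ) : gaussPDF x ≤ gaussPDF 0 := by
  rw [gaussPDF_eq_mul_exp x]
  exact mul_le_of_le_one_right (gaussPDF_pos 0).le (exp_le_one_iff.2 (by nlinarith [sq_nonneg x]))

lemma mul_gaussPDF_le_gaussPDF_zero (x : ℝ) : x * gaussPDF x ≤ gaussPDF 0 := by
  have hx : x ≤ exp (x ^ 2 / 2) := by
    nlinarith [add_one_le_exp (x ^ 2 / 2), sq_nonneg (x - 1)]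
  have h : x * exp (-x ^ 2 / 2) ≤ 1 := calc
    x * exp (-x ^ 2 / 2) ≤ exp (x ^ 2 / 2) * exp (-x ^ 2 / 2) := by gcongr
    _ = 1 := by rw [← exp_add, neg_div, add_neg_cancel, exp_zero]
  rw [gaussPDF_eq_mul_exp x, mul_left_comm]
  exact mul_le_of_le_one_right (gaussPDF_pos 0).le h

lemma gaussCDF_eq_integral (x : ℝ) : gaussCDF x = ∫ t in Iic x, gaussPDF t := by
  rw [gaussCDF, gaussianReal_apply_eq_integral 0 one_ne_zero,
    ENNReal.toReal_ofReal (integral_nonneg fun t => gaussianPDFReal_nonneg 0 1 t)]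
  rfl

lemma gaussCDF_eq_cdf : gaussCDF = cdf (gaussianReal 0 1) := by
  ext x; simp [gaussCDF, cdf_eq_real, measureReal_def]

lemma gaussCDF_le_one (x : ℝ) : gaussCDF x ≤ 1 := gaussCDF_eq_cdf ▸ cdf_le_one _ x

lemma gaussCDF_pos (x : ℝ) : 0 < gaussCDF x := by
  rw [gaussCDF_eq_integral, setIntegral_pos_iff_support_of_nonneg_ae
    (ae_of_all _ fun t => (gaussPDF_pos t).le) integrable_gaussPDF.integrableOn,
    Function.support_eq_univ fun t => (gaussPDF_pos t).ne', univ_inter, volume_Iic]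
  exact ENNReal.zero_lt_top

lemma hasDerivAt_gaussCDF (x : ℝ) : HasDerivAt gaussCDF (gaussPDF x) x := by
  have h (y : ℝ) : gaussCDF y = gaussCDF 0 + ∫ t in 0..y, gaussPDF t := by
    rw [gaussCDF_eq_integral, gaussCDF_eq_integral, ← intervalIntegral.integral_Iic_sub_Iic
      integrable_gaussPDF.integrableOn integrable_gaussPDF.integrableOn, add_sub_cancel]
  exact ((continuous_gaussPDF.integral_hasStrictDerivAt 0 x).hasDerivAt.const_add _)
    |>.congr_of_eventuallyEq (Eventually.of_forall h)

lemma integral_Iic_mul_gaussPDF (x : ℝ) : ∫ t in Iic x, t * gaussPDF t = -gaussPDF x := by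
  have hderiv (t : ℝ) : HasDerivAt (fun s => -gaussPDF s) (t * gaussPDF t) t := by
    simpa using (hasDerivAt_gaussPDF t).fun_neg
  rw [integral_Iic_of_hasDerivAt_of_tendsto' (fun t _ => hderiv t)
    integrable_mul_gaussPDF.integrableOn (by simpa using tendsto_gaussPDF_atBot.neg), sub_zero]

lemma mul_gaussCDF_add_gaussPDF_eq_integral (x : ℝ) :
    x * gaussCDF x + gaussPDF x = ∫ t in Iic x, (x - t) * gaussPDF t := by
  simp_rw [sub_mul]
  rw [integral_sub (integrable_gaussPDF.const_mul x).integrableOn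
    integrable_mul_gaussPDF.integrableOn, integral_const_mul, ← gaussCDF_eq_integral,
    integral_Iic_mul_gaussPDF, sub_neg_eq_add]

lemma mul_gaussCDF_add_gaussPDF_pos (x : ℝ) : 0 < x * gaussCDF x + gaussPDF x := by
  have hint : Integrable fun t => (x - t) * gaussPDF t :=
    (integrable_gaussPDF.const_mul x).sub integrable_mul_gaussPDF |>.congr
      (ae_of_all _ fun t => by simp only [Pi.sub_apply, sub_mul])
  rw [mul_gaussCDF_add_gaussPDF_eq_integral, setIntegral_pos_iff_support_of_nonneg_ae
    ((ae_restrict_iff' measurableSet_Iic).2 (ae_of_all _ fun t (ht : t ≤ x) =>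
      mul_nonneg (sub_nonneg.2 ht) (gaussPDF_pos t).le)) hint.integrableOn]
  have hIio : Iio x ⊆ Function.support (fun t => (x - t) * gaussPDF t) ∩ Iic x :=
    fun t (ht : t < x) => ⟨(mul_pos (sub_pos.2 ht) (gaussPDF_pos t)).ne', ht.le⟩
  exact (volume_Iio (a := x) ▸ ENNReal.zero_lt_top).trans_le (measure_mono hIio)

lemma sq_sub_add_two_pos (x : ℝ) : 0 < x ^ 2 - x + 2 := by nlinarith [sq_nonneg (x - 1)]

noncomputable def gaussCDFLower (x : ℝ) : ℝ := gaussPDF x * (1 - x) / (x ^ 2 - x + 2)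

lemma hasDerivAt_gaussCDF_sub_gaussCDFLower (x : ℝ) :
    HasDerivAt (fun t => gaussCDF t - gaussCDFLower t)
      (gaussPDF x * (x ^ 2 + 5) / (x ^ 2 - x + 2) ^ 2) x := by
  have hD := (sq_sub_add_two_pos x).ne'
  have hden := ((hasDerivAt_pow 2 x).fun_sub (hasDerivAt_id' x)).add_const 2
  have hnum := (hasDerivAt_gaussPDF x).fun_mul ((hasDerivAt_id' x).const_sub 1)
  refine ((hasDerivAt_gaussCDF x).sub (hnum.div hden hD)).congr_deriv ?_
  generalize hD_def : x ^ 2 - x + 2 = D at hD ⊢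
  field_simp
  rw [← hD_def]
  ring

lemma abs_gaussCDFLower_le (x : ℝ) : |gaussCDFLower x| ≤ gaussPDF x := by
  have hp := gaussPDF_pos x
  have hD := sq_sub_add_two_pos x
  rw [gaussCDFLower, mul_div_assoc, abs_mul, abs_of_pos hp, abs_div, abs_of_pos hD]
  refine mul_le_of_le_one_right hp.le ((div_le_one hD).2 (abs_le.2 ⟨?_, ?_⟩)) <;>
    nlinarith [sq_nonneg (x - 1)]

lemma gaussCDFLower_le_gaussCDF (x : ℝ) : gaussCDFLower x ≤ gaussCDF x := by
  have hmono : Monotone fun t => gaussCDF t - gaussCDFLower t :=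
    monotone_of_hasDerivAt_nonneg hasDerivAt_gaussCDF_sub_gaussCDFLower fun t => by
      have := gaussPDF_pos t
      positivity
  have hlim : Tendsto (fun t => gaussCDF t - gaussCDFLower t) atBot (𝓝 0) := by
    rw [← sub_zero (0 : ℝ)]
    exact (gaussCDF_eq_cdf ▸ tendsto_cdf_atBot _).sub
      (squeeze_zero_norm abs_gaussCDFLower_le tendsto_gaussPDF_atBot)
  exact sub_nonneg.1 (hmono.le_of_tendsto hlim x)

lemma G_pos (x : ℝ) : 0 < G x := by
  have := gaussPDF_pos x
  have := mul_gaussCDF_add_gaussPDF_pos x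
  have := gaussCDF_pos x
  rw [G, show x * gaussPDF x * gaussCDF x + gaussPDF x ^ 2
    = gaussPDF x * (x * gaussCDF x + gaussPDF x) by ring]
  positivity

lemma G_le_four_of_nonpos {x : ℝ} (hx : x ≤ 0) : G x ≤ 4 := by
  have hp := gaussPDF_pos x
  have hD := sq_sub_add_two_pos x
  have hlow := gaussCDFLower_le_gaussCDF x
  have hlow_nonneg : 0 ≤ gaussCDFLower x := div_nonneg (mul_nonneg hp.le (by linarith)) hD.le
  rw [G, div_le_iff₀ (pow_pos (gaussCDF_pos x) 2)]
  calc x * gaussPDF x * gaussCDF x + gaussPDF x ^ 2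
      ≤ x * gaussPDF x * gaussCDFLower x + gaussPDF x ^ 2 := by
        gcongr ?_ + _
        exact mul_le_mul_of_nonpos_left hlow (mul_nonpos_of_nonpos_of_nonneg hx hp.le)
    _ ≤ 4 * gaussCDFLower x ^ 2 := by
        rw [gaussCDFLower]
        set D := x ^ 2 - x + 2 with hD_def
        rw [← sub_nonneg]
        have hdiff : 4 * (gaussPDF x * (1 - x) / D) ^ 2
            - (x * gaussPDF x * (gaussPDF x * (1 - x) / D) + gaussPDF x ^ 2)
            = gaussPDF x ^ 2 * (4 * (1 - x) ^ 2 - 2 * D) / D ^ 2 := by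
          field_simp
          rw [hD_def]
          ring
        rw [hdiff]
        have : 0 ≤ 4 * (1 - x) ^ 2 - 2 * D := by rw [hD_def]; nlinarith
        positivity
    _ ≤ 4 * gaussCDF x ^ 2 := by gcongr

lemma G_le_of_nonneg {x : ℝ} (hx : 0 ≤ x) : G x ≤ 4 / gaussPDF 0 + 4 := by
  have hp := gaussPDF_pos x
  have hp0 := gaussPDF_pos 0
  have hΦ : gaussPDF 0 / 2 ≤ gaussCDF x := by
    have h0 : gaussCDFLower 0 = gaussPDF 0 / 2 := by norm_num [gaussCDFLower]
    exact h0 ▸ (gaussCDFLower_le_gaussCDF 0).trans (gaussCDF_eq_cdf ▸ monotone_cdf _ hx)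
  have h1 : x * gaussPDF x * gaussCDF x ≤ gaussPDF 0 :=
    (mul_le_of_le_one_right (mul_nonneg hx hp.le) (gaussCDF_le_one x)).trans
      (mul_gaussPDF_le_gaussPDF_zero x)
  have h2 : gaussPDF x ^ 2 ≤ gaussPDF 0 ^ 2 := by gcongr; exact gaussPDF_le_gaussPDF_zero x
  rw [G, div_le_iff₀ (pow_pos (gaussCDF_pos x) 2)]
  calc x * gaussPDF x * gaussCDF x + gaussPDF x ^ 2 ≤ gaussPDF 0 + gaussPDF 0 ^ 2 := by linarith
    _ = (4 / gaussPDF 0 + 4) * (gaussPDF 0 / 2) ^ 2 := by field_simp; ring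
    _ ≤ (4 / gaussPDF 0 + 4) * gaussCDF x ^ 2 := by gcongr

/-- **Lemma 3**: `G` is positive everywhere and bounded above by a positive constant. -/
theorem stmt6 : (∀ x : ℝ, 0 < G x) ∧ ∃ C : ℝ, 0 < C ∧ ∀ x : ℝ, G x < C := by
  have hp0 := gaussPDF_pos 0
  refine ⟨G_pos, 4 / gaussPDF 0 + 5, by positivity, fun x => ?_⟩
  rcases le_total x 0 with hx | hx
  · linarith [G_le_four_of_nonpos hx, div_pos four_pos hp0]
  · linarith [G_le_of_nonneg hx]
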